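/- arXiv:2301.00703 — 4 statements merged into one kernel-verified Lean document; each statement's English description precedes it below -/
import Mathlib

section
/- Let K be a field of characteristic zero, let p(x) be a Laurent polynomial over K in one variable, and let n, n' ≥ 0. Let R be a Laurent polynomial in z_1, …, z_n over K which is invariant under all permutations of its variables, and let R' be a Laurent polynomial in n' variables invariant under all permutations of its variables. Then the rational function G(z_1, …, z_{n+n'}) := ∑_{σ ∈ S_{n+n'}} σ·[ R(z_1, …, z_n) · R'(z_{n+1}, …, z_{n+n'}) · ∏_{1 ≤ a ≤ n < b ≤ n+n'} p(z_a/z_b) · z_b/(z_b − z_a) ] (where a permutation σ acts on a rational function by permuting the variables z_1, …, z_{n+n'}) is a Laurent polynomial in z_1, …, z_{n+n'}, symmetric under all permutations of the variables. -/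
open MvPolynomial

noncomputable section

/-- The field of rational functions over `K` in countably many variables `z₀, z₁, z₂, …`. -/
abbrev Fld (K : Type*) [Field K] := FractionRing (MvPolynomial ℕ K)

/-- The generic variable `z_i`. -/
def ZZ (K : Type*) [Field K] (i : ℕ) : Fld K :=
  algebraMap (MvPolynomial ℕ K) (Fld K) (X i)

/-- Evaluation of a one-variable Laurent polynomial `p` over `K` at a rational function. -/
def lEv (K : Type*) [Field K] (p : LaurentPolynomial K) (x : Fld K) : Fld K :=
  Finsupp.sum p.coeff fun m c => algebraMap K (Fld K) c * x ^ m

/-- Evaluation of the Laurent polynomial in `n` variables with coefficient function `R`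
(the coefficient of the monomial `z₁^{e 1} ⋯ z_n^{e n}` being `R e`) at the point `v`. -/
def evF (K : Type*) [Field K] {n : ℕ} (R : (Fin n → ℤ) →₀ K) (v : Fin n → Fld K) : Fld K :=
  Finsupp.sum R fun e c => algebraMap K (Fld K) c * ∏ i, v i ^ e i

/-!
Write `Δ` for the Vandermonde product `∏_{i<j} (z_j - z_i)` and `M` for `z₁ ⋯ z_N`. Every cross
denominator `z_b - z_a` of the unpermuted term `F` divides `Δ`, so `F · Δ · M^m = P` for some
polynomial `P`. A permutation `σ` of the variables multiplies `Δ` by `sign σ` and fixes `M`, hence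
`G · Δ · M^m = ∑_σ sign σ · σP` is an alternant. An alternant vanishes on each hyperplane
`z_i = z_j` (the permutations `σ` and `(i j) σ` cancel in pairs), so it is divisible by the
pairwise non-associated primes `z_j - z_i`, hence by `Δ`, and the quotient `Q` is symmetric.
Thus `G = Q / M^m` is a symmetric Laurent polynomial.
-/

namespace MvPolynomial

section DivisibilityByDifferences

variable {R σ : Type*} [CommRing R]

theorem X_sub_X_dvd_iff [DecidableEq σ] {i j : σ} {Q : MvPolynomial σ R} :
    X j - X i ∣ Q ↔ aeval (Function.update (X : σ → MvPolynomial σ R) j (X i)) Q = 0 := by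
  have hmk : (Ideal.Quotient.mkₐ R (Ideal.span {X j - X i})).comp
      (aeval (Function.update (X : σ → MvPolynomial σ R) j (X i))) = Ideal.Quotient.mkₐ R _ := by
    refine algHom_ext fun k => ?_
    rw [AlgHom.comp_apply, aeval_X, Ideal.Quotient.mkₐ_eq_mk, Ideal.Quotient.mk_eq_mk_iff_sub_mem,
      Ideal.mem_span_singleton]
    rcases eq_or_ne k j with rfl | hkj
    · simpa using dvd_sub_comm.mp (dvd_refl (X k - X i : MvPolynomial σ R))
    · simp [Function.update_of_ne hkj]
  constructor
  · rintro ⟨M, rfl⟩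
    simp [Function.update_apply]
  · intro hQ
    have := AlgHom.congr_fun hmk Q
    rw [AlgHom.comp_apply, hQ, map_zero, eq_comm, Ideal.Quotient.mkₐ_eq_mk,
      Ideal.Quotient.eq_zero_iff_mem, Ideal.mem_span_singleton] at this
    exact this

theorem X_sub_X_ne_zero [Nontrivial R] {i j : σ} (hij : i ≠ j) :
    (X j - X i : MvPolynomial σ R) ≠ 0 :=
  sub_ne_zero.mpr ((X_injective (σ := σ) (R := R)).ne hij.symm)

theorem prime_X_sub_X [IsDomain R] [DecidableEq σ] {i j : σ} (hij : i ≠ j) :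
    Prime (X j - X i : MvPolynomial σ R) := by
  have hker : Ideal.span {(X j - X i : MvPolynomial σ R)} =
      RingHom.ker (aeval (Function.update (X : σ → MvPolynomial σ R) j (X i))) := by
    ext Q
    rw [Ideal.mem_span_singleton, RingHom.mem_ker, X_sub_X_dvd_iff]
  rw [← Ideal.span_singleton_prime (X_sub_X_ne_zero (R := R) hij), hker]
  exact RingHom.ker_isPrime _

theorem X_sub_X_not_dvd [Nontrivial R] [LinearOrder σ] {i j k l : σ} (hij : i < j) (hkl : k < l)
    (hne : (i, j) ≠ (k, l)) : ¬ X j - X i ∣ (X l - X k : MvPolynomial σ R) := by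
  rw [X_sub_X_dvd_iff, map_sub, aeval_X, aeval_X]
  refine sub_ne_zero.mpr fun h => ?_
  simp only [Function.update_apply] at h
  split_ifs at h with hl hk hk <;> have h' := X_injective h <;> subst_vars <;> simp_all [lt_asymm]

end DivisibilityByDifferences

section Alternant

variable {R σ : Type*} [CommRing R] [Fintype σ] [DecidableEq σ]

def alternant (P : MvPolynomial σ R) : MvPolynomial σ R :=
  ∑ τ : Equiv.Perm σ, Equiv.Perm.sign τ • rename τ P

theorem rename_alternant (τ : Equiv.Perm σ) (P : MvPolynomial σ R) :
    rename τ (alternant P) = Equiv.Perm.sign τ • alternant P := by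
  rw [alternant, map_sum, Finset.smul_sum]
  refine Fintype.sum_equiv (Equiv.mulLeft τ) _ _ fun ρ => ?_
  rw [Equiv.coe_mulLeft, Units.smul_def, map_zsmul, rename_rename, ← Equiv.Perm.coe_mul,
    ← Units.smul_def, smul_smul, Equiv.Perm.sign_mul, ← mul_assoc, Int.units_mul_self, one_mul]

theorem X_sub_X_dvd_alternant {i j : σ} (hij : i ≠ j) (P : MvPolynomial σ R) :
    X j - X i ∣ alternant P := by
  have hu : Function.update (X : σ → MvPolynomial σ R) j (X i) ∘ Equiv.swap i j =
      Function.update X j (X i) := by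
    funext k
    simp only [Function.comp_apply, Function.update_apply, Equiv.swap_apply_def]
    split_ifs <;> simp_all
  rw [X_sub_X_dvd_iff, alternant, map_sum]
  refine Finset.sum_involution (fun ρ _ => Equiv.swap i j * ρ) (fun ρ _ => ?_) (fun ρ _ _ => ?_)
    (fun _ _ => Finset.mem_univ _) (fun ρ _ => Equiv.swap_mul_self_mul i j ρ)
  · rw [Equiv.Perm.sign_mul, Equiv.Perm.sign_swap hij, Equiv.Perm.coe_mul, Units.smul_def,
      Units.smul_def, map_zsmul, map_zsmul, aeval_rename, aeval_rename, ← Function.comp_assoc, hu]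
    simp
  · rwa [Ne, mul_eq_right, Equiv.swap_eq_one_iff]

end Alternant

section Vandermonde

variable (R : Type*) [CommRing R] (N : ℕ)

def vandermonde : MvPolynomial (Fin N) R :=
  (Matrix.vandermonde X).det

variable {R N}

theorem rename_vandermonde (τ : Equiv.Perm (Fin N)) :
    rename τ (vandermonde R N) = Equiv.Perm.sign τ • vandermonde R N := by
  have hrows : (rename τ).mapMatrix (Matrix.vandermonde (X : Fin N → MvPolynomial (Fin N) R)) =
      (Matrix.vandermonde X).submatrix τ id := by
    ext i j
    simp [Matrix.vandermonde_apply]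
  rw [vandermonde, AlgHom.map_det, hrows, Matrix.det_permute, Units.smul_def, zsmul_eq_mul]

theorem vandermonde_ne_zero [IsDomain R] : vandermonde R N ≠ 0 :=
  Matrix.det_vandermonde_ne_zero_iff.mpr X_injective

theorem prod_X_natAdd_sub_X_castAdd_dvd_vandermonde (n n' : ℕ) :
    ∏ i : Fin n, ∏ j : Fin n', (X (Fin.natAdd n j) - X (Fin.castAdd n' i)) ∣
      vandermonde R (n + n') := by
  rw [vandermonde, Matrix.det_vandermonde, Fin.prod_univ_add]
  refine dvd_mul_of_dvd_left (Finset.prod_dvd_prod_of_dvd _ _ fun i _ => ?_) _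
  refine (dvd_of_eq (Finset.prod_map Finset.univ (Fin.natAddEmb n)
    fun b => X b - X (Fin.castAdd n' i)).symm).trans
    (Finset.prod_dvd_prod_of_subset _ _ _ fun b hb => ?_)
  obtain ⟨j, -, rfl⟩ := Finset.mem_map.mp hb
  simp [Fin.lt_def, Nat.lt_add_right _ i.isLt]

theorem vandermonde_dvd {K : Type*} [Field K] {Q : MvPolynomial (Fin N) K}
    (hQ : ∀ i j, i < j → X j - X i ∣ Q) : vandermonde K N ∣ Q := by
  rw [vandermonde, Matrix.det_vandermonde, Finset.prod_sigma']
  refine Finset.prod_dvd_of_isRelPrime (fun x hx y hy hxy => ?_)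
    fun x hx => hQ _ _ (Finset.mem_Ioi.mp (Finset.mem_sigma.mp hx).2)
  have hx' := Finset.mem_Ioi.mp (Finset.mem_sigma.mp hx).2
  have hy' := Finset.mem_Ioi.mp (Finset.mem_sigma.mp hy).2
  refine (prime_X_sub_X hx'.ne).irreducible.isRelPrime_iff_not_dvd.mpr
    (X_sub_X_not_dvd hx' hy' fun h => hxy ?_)
  exact Sigma.ext (congrArg Prod.fst h) (heq_of_eq (congrArg Prod.snd h))

theorem vandermonde_dvd_alternant {K : Type*} [Field K] (P : MvPolynomial (Fin N) K) :
    vandermonde K N ∣ alternant P :=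
  vandermonde_dvd fun _ _ hij => X_sub_X_dvd_alternant hij.ne P

theorem IsSymmetric.of_alternant_eq_vandermonde_mul [IsDomain R] {P Q : MvPolynomial (Fin N) R}
    (h : alternant P = vandermonde R N * Q) : Q.IsSymmetric := by
  intro τ
  have hτ := rename_alternant τ P
  rw [h, map_mul, rename_vandermonde, smul_mul_assoc] at hτ
  exact mul_left_cancel₀ vandermonde_ne_zero (smul_left_cancel_iff _ |>.mp hτ)

end Vandermonde

end MvPolynomial

section GenericPoint

variable (K : Type*) [Field K] (N : ℕ)

def zPoint : Fin N → Fld K := fun i => ZZ K i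

variable {K N}

theorem ZZ_ne_zero (k : ℕ) : ZZ K k ≠ 0 :=
  (map_ne_zero_iff _ (IsFractionRing.injective (MvPolynomial ℕ K) (Fld K))).mpr (X_ne_zero k)

theorem ZZ_sub_ZZ_ne_zero {a b : ℕ} (hab : a ≠ b) : ZZ K a - ZZ K b ≠ 0 := by
  rw [ZZ, ZZ, ← map_sub]
  exact (map_ne_zero_iff _ (IsFractionRing.injective (MvPolynomial ℕ K) (Fld K))).mpr
    (sub_ne_zero.mpr ((X_injective (R := K)).ne hab))

theorem aeval_zPoint_injective :
    Function.Injective (aeval (zPoint K N) : MvPolynomial (Fin N) K → Fld K) := by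
  have h : aeval (zPoint K N) =
      (IsScalarTower.toAlgHom K (MvPolynomial ℕ K) (Fld K)).comp (rename Fin.val) := by
    refine algHom_ext fun i => ?_
    simp [zPoint, ZZ]
  rw [h, AlgHom.coe_comp]
  exact (IsFractionRing.injective _ _).comp (rename_injective _ Fin.val_injective)

def permField (τ : Equiv.Perm (Fin N)) : Fld K ≃ₐ[K] Fld K :=
  IsFractionRing.fieldEquivOfAlgEquiv K (Fld K) (Fld K)
    (renameEquiv K (τ.extendDomain Fin.equivSubtype))

theorem permField_zPoint (τ : Equiv.Perm (Fin N)) (i : Fin N) :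
    permField τ (zPoint K N i) = zPoint K N (τ i) := by
  rw [permField, zPoint, zPoint, ZZ, ZZ,
    IsFractionRing.fieldEquivOfAlgEquiv_algebraMap, renameEquiv_apply, rename_X,
    Equiv.Perm.extendDomain_apply_subtype τ Fin.equivSubtype (b := i.val) i.isLt]
  rfl

theorem permField_aeval (τ : Equiv.Perm (Fin N)) (Q : MvPolynomial (Fin N) K) :
    permField τ (aeval (zPoint K N) Q) = aeval (zPoint K N) (rename τ Q) := by
  rw [← AlgEquiv.coe_toAlgHom, comp_aeval_apply, aeval_rename]
  exact congrArg (fun g => aeval g Q) (funext (permField_zPoint τ))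

end GenericPoint

section MapEvaluation

variable {K : Type*} [Field K] {F : Type*} [FunLike F (Fld K) (Fld K)]
  [AlgHomClass F K (Fld K) (Fld K)] (φ : F)

theorem map_evF {k : ℕ} (R : (Fin k → ℤ) →₀ K) (v : Fin k → Fld K) :
    φ (evF K R v) = evF K R fun i => φ (v i) := by
  simp only [evF, map_finsuppSum, map_mul, AlgHomClass.commutes, map_prod, map_zpow₀]

theorem map_lEv (p : LaurentPolynomial K) (x : Fld K) : φ (lEv K p x) = lEv K p (φ x) := by
  simp only [lEv, map_finsuppSum, map_mul, AlgHomClass.commutes, map_zpow₀]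

end MapEvaluation

theorem Subalgebra.zpow_mem_of_inv_mem {R L : Type*} [CommSemiring R] [DivisionRing L] [Algebra R L]
    {S : Subalgebra R L} {x : L} (hx : x ∈ S) (hx' : x⁻¹ ∈ S) (m : ℤ) : x ^ m ∈ S := by
  rcases m with m | m
  · simpa using pow_mem hx m
  · simpa [zpow_negSucc] using pow_mem hx' (m + 1)

section LaurentSubalgebra

variable {K : Type*} [Field K]

theorem evF_mem {S : Subalgebra K (Fld K)} {k : ℕ} (R : (Fin k → ℤ) →₀ K) {v : Fin k → Fld K}
    (hv : ∀ i, v i ∈ S) (hv' : ∀ i, (v i)⁻¹ ∈ S) : evF K R v ∈ S :=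
  sum_mem fun e _ => mul_mem (S.algebraMap_mem _)
    (prod_mem fun i _ => S.zpow_mem_of_inv_mem (hv i) (hv' i) (e i))

theorem lEv_mem {S : Subalgebra K (Fld K)} (p : LaurentPolynomial K) {x : Fld K} (hx : x ∈ S)
    (hx' : x⁻¹ ∈ S) : lEv K p x ∈ S :=
  sum_mem fun m _ => mul_mem (S.algebraMap_mem _) (S.zpow_mem_of_inv_mem hx hx' m)

variable (K) (N : ℕ)

def laurentSubalgebra : Subalgebra K (Fld K) :=
  Algebra.adjoin K (Set.range (zPoint K N) ∪ Set.range fun i => (zPoint K N i)⁻¹)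

variable {K N}

theorem zPoint_mem (i : Fin N) : zPoint K N i ∈ laurentSubalgebra K N :=
  Algebra.subset_adjoin (Or.inl ⟨i, rfl⟩)

theorem inv_zPoint_mem (i : Fin N) : (zPoint K N i)⁻¹ ∈ laurentSubalgebra K N :=
  Algebra.subset_adjoin (Or.inr ⟨i, rfl⟩)

theorem aeval_zPoint_mem (Q : MvPolynomial (Fin N) K) :
    aeval (zPoint K N) Q ∈ laurentSubalgebra K N := by
  have hQ : aeval (zPoint K N) Q ∈ Algebra.adjoin K (Set.range (zPoint K N)) := by
    rw [Algebra.adjoin_range_eq_range_aeval]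
    exact ⟨Q, rfl⟩
  exact Algebra.adjoin_mono Set.subset_union_left hQ

theorem exists_mul_pow_eq_aeval {x : Fld K} (hx : x ∈ laurentSubalgebra K N) :
    ∃ (m : ℕ) (Q : MvPolynomial (Fin N) K),
      x * (∏ i, zPoint K N i) ^ m = aeval (zPoint K N) Q := by
  have hM (m : ℕ) :
      aeval (zPoint K N) ((∏ i, X i : MvPolynomial (Fin N) K) ^ m) = (∏ i, zPoint K N i) ^ m := by
    simp
  induction hx using Algebra.adjoin_induction with
  | mem x hx =>
    rcases hx with ⟨i, rfl⟩ | ⟨i, rfl⟩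
    · exact ⟨0, X i, by simp⟩
    · refine ⟨1, ∏ j ∈ Finset.univ.erase i, X j, ?_⟩
      rw [map_prod, pow_one, ← Finset.mul_prod_erase _ _ (Finset.mem_univ i), ← mul_assoc,
        inv_mul_cancel₀ (ZZ_ne_zero _), one_mul]
      simp
  | algebraMap r => exact ⟨0, C r, by simp⟩
  | add x y _ _ ihx ihy =>
    obtain ⟨m₁, Q₁, h₁⟩ := ihx
    obtain ⟨m₂, Q₂, h₂⟩ := ihy
    refine ⟨m₁ + m₂, Q₁ * (∏ i, X i) ^ m₂ + Q₂ * (∏ i, X i) ^ m₁, ?_⟩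
    rw [map_add, map_mul, map_mul, ← h₁, ← h₂, hM, hM]
    ring
  | mul x y _ _ ihx ihy =>
    obtain ⟨m₁, Q₁, h₁⟩ := ihx
    obtain ⟨m₂, Q₂, h₂⟩ := ihy
    refine ⟨m₁ + m₂, Q₁ * Q₂, ?_⟩
    rw [map_mul, ← h₁, ← h₂]
    ring

end LaurentSubalgebra

theorem Finsupp.embDomain_apply_of_semiconj {α β M : Type*} [Zero M] {f : α ↪ β} {l : α →₀ M}
    {κ : α ≃ α} {ρ : β ≃ β} (hf : ∀ a, f (κ a) = ρ (f a)) (hl : ∀ a, l (κ a) = l a) (b : β) :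
    l.embDomain f (ρ b) = l.embDomain f b := by
  by_cases hb : b ∈ Set.range f
  · obtain ⟨a, rfl⟩ := hb
    rw [← hf, Finsupp.embDomain_apply_self, Finsupp.embDomain_apply_self, hl]
  · have hρb : ρ b ∉ Set.range f := by
      rintro ⟨a, ha⟩
      exact hb ⟨κ.symm a, ρ.injective (by rw [← hf, κ.apply_symm_apply, ha])⟩
    rw [Finsupp.embDomain_of_notMem_range _ _ _ hb, Finsupp.embDomain_of_notMem_range _ _ _ hρb]

section LaurentDivPow

variable {K : Type*} [Field K] {N : ℕ}

@[simps]
def exponentShift (m : ℕ) : (Fin N →₀ ℕ) ↪ (Fin N → ℤ) where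
  toFun d i := d i - m
  inj' d d' h := Finsupp.ext fun i => by simpa using congrFun h i

def laurentDivPow (Q : MvPolynomial (Fin N) K) (m : ℕ) : (Fin N → ℤ) →₀ K :=
  (AddMonoidAlgebra.coeff Q).embDomain (exponentShift m)

theorem laurentDivPow_comp_perm {Q : MvPolynomial (Fin N) K} (hQ : Q.IsSymmetric) (m : ℕ)
    (τ : Equiv.Perm (Fin N)) (e : Fin N → ℤ) :
    laurentDivPow Q m (e ∘ τ) = laurentDivPow Q m e := by
  refine Finsupp.embDomain_apply_of_semiconj (κ := Finsupp.equivCongrLeft τ.symm)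
    (ρ := τ.symm.arrowCongr (Equiv.refl ℤ)) (fun d => ?_) (fun d => ?_) e
  · funext i
    simp [Finsupp.equivCongrLeft_apply]
  · have hd : Finsupp.mapDomain τ (Finsupp.equivCongrLeft τ.symm d) = d := by
      rw [Finsupp.equivCongrLeft_apply, Finsupp.equivMapDomain_eq_mapDomain,
        ← Finsupp.mapDomain_comp, Equiv.self_comp_symm, Finsupp.mapDomain_id]
    change coeff _ Q = coeff d Q
    rw [← coeff_rename_mapDomain τ τ.injective, hd, hQ τ]

theorem evF_laurentDivPow_mul_pow (Q : MvPolynomial (Fin N) K) (m : ℕ) :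
    evF K (laurentDivPow Q m) (zPoint K N) * (∏ i, zPoint K N i) ^ m = aeval (zPoint K N) Q := by
  rw [evF, laurentDivPow, Finsupp.sum_embDomain, aeval_def, eval₂_eq', Finsupp.sum,
    Finset.sum_mul]
  refine Finset.sum_congr rfl fun d _ => ?_
  rw [mul_assoc, ← Finset.prod_pow, ← Finset.prod_mul_distrib]
  congr 2
  funext i
  rw [← zpow_natCast, ← zpow_natCast, ← zpow_add₀ (ZZ_ne_zero _), exponentShift_apply,
    sub_add_cancel]

end LaurentDivPow

section ShuffleTerm

variable {K : Type*} [Field K] (p : LaurentPolynomial K) {n n' : ℕ} (R : (Fin n → ℤ) →₀ K)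
  (R' : (Fin n' → ℤ) →₀ K)

def shuffleTerm (z : Fin (n + n') → Fld K) : Fld K :=
  evF K R (fun i => z (Fin.castAdd n' i)) * evF K R' (fun j => z (Fin.natAdd n j)) *
    ∏ i : Fin n, ∏ j : Fin n', lEv K p (z (Fin.castAdd n' i) / z (Fin.natAdd n j)) *
      (z (Fin.natAdd n j) / (z (Fin.natAdd n j) - z (Fin.castAdd n' i)))

theorem map_shuffleTerm {F : Type*} [FunLike F (Fld K) (Fld K)] [AlgHomClass F K (Fld K) (Fld K)]
    (φ : F) (z : Fin (n + n') → Fld K) :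
    φ (shuffleTerm p R R' z) = shuffleTerm p R R' fun k => φ (z k) := by
  simp only [shuffleTerm, map_mul, map_prod, map_div₀, map_sub, map_evF, map_lEv]

theorem shuffleTerm_mul_vandermonde_mem :
    shuffleTerm p R R' (zPoint K (n + n')) * aeval (zPoint K (n + n')) (vandermonde K (n + n')) ∈
      laurentSubalgebra K (n + n') := by
  set z := zPoint K (n + n')
  obtain ⟨W, hW⟩ := prod_X_natAdd_sub_X_castAdd_dvd_vandermonde (R := K) n n'
  have hcancel : shuffleTerm p R R' z *
      aeval z (∏ i : Fin n, ∏ j : Fin n',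
        (X (Fin.natAdd n j) - X (Fin.castAdd n' i) : MvPolynomial (Fin (n + n')) K)) =
      evF K R (fun i => z (Fin.castAdd n' i)) * evF K R' (fun j => z (Fin.natAdd n j)) *
        ∏ i : Fin n, ∏ j : Fin n', lEv K p (z (Fin.castAdd n' i) / z (Fin.natAdd n j)) *
          z (Fin.natAdd n j) := by
    simp only [shuffleTerm, map_prod, map_sub, aeval_X, mul_assoc, ← Finset.prod_mul_distrib]
    refine congrArg _ (congrArg _ (Finset.prod_congr rfl fun i _ => Finset.prod_congr rfl
      fun j _ => ?_))
    have hne : z (Fin.natAdd n j) - z (Fin.castAdd n' i) ≠ 0 :=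
      ZZ_sub_ZZ_ne_zero (by simp; omega)
    field_simp
  have hmem {a b : Fin (n + n')} : z a / z b ∈ laurentSubalgebra K (n + n') :=
    mul_mem (zPoint_mem a) (inv_zPoint_mem b)
  rw [hW, map_mul, ← mul_assoc, hcancel]
  refine mul_mem (mul_mem (mul_mem ?_ ?_) ?_) (aeval_zPoint_mem W)
  · exact evF_mem R (fun _ => zPoint_mem _) fun _ => inv_zPoint_mem _
  · exact evF_mem R' (fun _ => zPoint_mem _) fun _ => inv_zPoint_mem _
  · exact prod_mem fun i _ => prod_mem fun j _ =>
      mul_mem (lEv_mem p hmem (by rw [inv_div]; exact hmem)) (zPoint_mem _)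

theorem permField_shuffleTerm (τ : Equiv.Perm (Fin (n + n'))) :
    permField τ (shuffleTerm p R R' (zPoint K (n + n'))) =
      shuffleTerm p R R' fun k => zPoint K (n + n') (τ k) := by
  simp only [map_shuffleTerm, permField_zPoint]

end ShuffleTerm

theorem permField_mul_vandermonde {K : Type*} [Field K] {N m : ℕ} {x : Fld K}
    {P : MvPolynomial (Fin N) K}
    (h : x * aeval (zPoint K N) (vandermonde K N) * (∏ i, zPoint K N i) ^ m =
      aeval (zPoint K N) P) (τ : Equiv.Perm (Fin N)) :
    permField τ x * aeval (zPoint K N) (vandermonde K N) * (∏ i, zPoint K N i) ^ m =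
      Equiv.Perm.sign τ • aeval (zPoint K N) (rename τ P) := by
  have hprod : permField τ (∏ i, zPoint K N i) = ∏ i, zPoint K N i := by
    simp only [map_prod, permField_zPoint]
    exact Equiv.prod_comp τ _
  have hτ := congrArg (permField τ) h
  rw [map_mul, map_mul, map_pow, permField_aeval, permField_aeval, rename_vandermonde, hprod,
    Units.smul_def, map_zsmul, ← Units.smul_def, mul_smul_comm, smul_mul_assoc] at hτ
  rw [← hτ, smul_smul, Int.units_mul_self, one_smul]

theorem stmt4_general (K : Type*) [Field K] (p : LaurentPolynomial K) (n n' : ℕ)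
    (R : (Fin n → ℤ) →₀ K) (R' : (Fin n' → ℤ) →₀ K) :
    ∃ C : (Fin (n + n') → ℤ) →₀ K,
      (∀ (σ : Equiv.Perm (Fin (n + n'))) (e : Fin (n + n') → ℤ), C (e ∘ σ) = C e) ∧
      evF K C (fun i => ZZ K i.val) =
        ∑ σ : Equiv.Perm (Fin (n + n')),
          evF K R (fun i => ZZ K (σ (Fin.castAdd n' i)).val) *
            evF K R' (fun j => ZZ K (σ (Fin.natAdd n j)).val) *
            ∏ i : Fin n, ∏ j : Fin n',
              lEv K p (ZZ K (σ (Fin.castAdd n' i)).val / ZZ K (σ (Fin.natAdd n j)).val) *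
                (ZZ K (σ (Fin.natAdd n j)).val /
                  (ZZ K (σ (Fin.natAdd n j)).val - ZZ K (σ (Fin.castAdd n' i)).val)) := by
  obtain ⟨m, P, hP⟩ := exists_mul_pow_eq_aeval (shuffleTerm_mul_vandermonde_mem p R R')
  obtain ⟨Q, hQ⟩ := vandermonde_dvd_alternant P
  have hsum :
      (∑ σ : Equiv.Perm (Fin (n + n')), shuffleTerm p R R' fun k => zPoint K (n + n') (σ k)) *
      aeval (zPoint K (n + n')) (vandermonde K (n + n')) * (∏ i, zPoint K (n + n') i) ^ m =
      aeval (zPoint K (n + n')) (vandermonde K (n + n')) * aeval (zPoint K (n + n')) Q := by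
    rw [← map_mul, ← hQ, alternant, map_sum, Finset.sum_mul, Finset.sum_mul]
    refine Finset.sum_congr rfl fun σ _ => ?_
    rw [← permField_shuffleTerm, permField_mul_vandermonde hP, Units.smul_def, Units.smul_def,
      map_zsmul]
  have hV : aeval (zPoint K (n + n')) (vandermonde K (n + n')) ≠ 0 :=
    (map_ne_zero_iff _ aeval_zPoint_injective).mpr vandermonde_ne_zero
  have hM : (∏ i, zPoint K (n + n') i) ^ m ≠ 0 :=
    pow_ne_zero m (Finset.prod_ne_zero_iff.mpr fun i _ => ZZ_ne_zero _)
  have hC : evF K (laurentDivPow Q m) (zPoint K (n + n')) =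
      ∑ σ : Equiv.Perm (Fin (n + n')), shuffleTerm p R R' fun k => zPoint K (n + n') (σ k) :=
    mul_right_cancel₀ hM (mul_left_cancel₀ hV (by rw [evF_laurentDivPow_mul_pow, ← hsum]; ring))
  -- the summands of the statement unfold to `shuffleTerm p R R' (zPoint K (n + n') ∘ σ)`
  exact ⟨laurentDivPow Q m, laurentDivPow_comp_perm (.of_alternant_eq_vandermonde_mul hQ) m, hC⟩

/-- Let `p` be a one-variable Laurent polynomial over a field `K` of
characteristic zero, and let `R`, `R'` be symmetric Laurent polynomials in `n`, resp. `n'`,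
variables.  Then the rational function
`G(z₁,…,z_{n+n'}) = ∑_{σ ∈ S_{n+n'}} σ·[R(z₁,…,z_n) R'(z_{n+1},…,z_{n+n'})
  ∏_{a ≤ n < b} p(z_a/z_b)·z_b/(z_b − z_a)]`
is a Laurent polynomial in `z₁,…,z_{n+n'}`, symmetric under all permutations of the
variables (i.e. it agrees, at the generic point, with the evaluation of some symmetric
Laurent-polynomial coefficient function `C`). -/
theorem stmt4 (K : Type*) [Field K] [CharZero K] (p : LaurentPolynomial K) (n n' : ℕ)
    (R : (Fin n → ℤ) →₀ K) (R' : (Fin n' → ℤ) →₀ K)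
    (hR : ∀ (σ : Equiv.Perm (Fin n)) (e : Fin n → ℤ), R (e ∘ σ) = R e)
    (hR' : ∀ (σ : Equiv.Perm (Fin n')) (e : Fin n' → ℤ), R' (e ∘ σ) = R' e) :
    ∃ C : (Fin (n + n') → ℤ) →₀ K,
      (∀ (σ : Equiv.Perm (Fin (n + n'))) (e : Fin (n + n') → ℤ), C (e ∘ σ) = C e) ∧
      evF K C (fun i => ZZ K i.val) =
        ∑ σ : Equiv.Perm (Fin (n + n')),
          evF K R (fun i => ZZ K (σ (Fin.castAdd n' i)).val) *
            evF K R' (fun j => ZZ K (σ (Fin.natAdd n j)).val) *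
            ∏ i : Fin n, ∏ j : Fin n',
              lEv K p (ZZ K (σ (Fin.castAdd n' i)).val / ZZ K (σ (Fin.natAdd n j)).val) *
                (ZZ K (σ (Fin.natAdd n j)).val /
                  (ZZ K (σ (Fin.natAdd n j)).val - ZZ K (σ (Fin.castAdd n' i)).val)) :=
  stmt4_general K p n n' R R'
end
end

section
/- Let K be a field of characteristic zero, let p(x) be a Laurent polynomial over K, and set ζ(x) = p(x)/(1−x) ∈ K(x). For symmetric Laurent polynomials R in n variables and R' in n' variables over K, define R * R' := (1/(n!·n'!)) ∑_{σ ∈ S_{n+n'}} σ·[ R(z_1,…,z_n) · R'(z_{n+1},…,z_{n+n'}) · ∏_{1 ≤ a ≤ n < b ≤ n+n'} ζ(z_a/z_b) ], an element of K(z_1,…,z_{n+n'}) symmetric in all variables. Then this operation is associative: for symmetric Laurent polynomials R, R', R'' in n, n', n'' variables respectively, (R * R') * R'' = R * (R' * R'') as rational functions in z_1, …, z_{n+n'+n''}. -/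
open MvPolynomial

noncomputable section

/-- The structure function `ζ(x) = p(x)/(1 - x)`. -/
def zetaF (K : Type*) [Field K] (p : LaurentPolynomial K) (x : Fld K) : Fld K :=
  lEv K p x / (1 - x)

/-- The shuffle product: for `f` a (rational) function of `k₁` variables and `g` one of `k₂`
variables,
`(f * g)(z₁,…,z_{k₁+k₂}) := (k₁! k₂!)⁻¹ ∑_{σ ∈ S_{k₁+k₂}} σ·[ f(z₁,…,z_{k₁})
  g(z_{k₁+1},…,z_{k₁+k₂}) ∏_{a ≤ k₁ < b} ζ(z_a/z_b) ]`. -/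
def shuf (K : Type*) [Field K] (p : LaurentPolynomial K) (k₁ k₂ : ℕ)
    (f : (Fin k₁ → Fld K) → Fld K) (g : (Fin k₂ → Fld K) → Fld K) :
    (Fin (k₁ + k₂) → Fld K) → Fld K :=
  fun v => (algebraMap K (Fld K) ((k₁.factorial : K) * (k₂.factorial : K)))⁻¹ *
    ∑ σ : Equiv.Perm (Fin (k₁ + k₂)),
      f (fun i => v (σ (Fin.castAdd k₂ i))) * g (fun j => v (σ (Fin.natAdd k₁ j))) *
        ∏ i : Fin k₁, ∏ j : Fin k₂,
          zetaF K p (v (σ (Fin.castAdd k₂ i)) / v (σ (Fin.natAdd k₁ j)))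

/-!
Write the shuffle product as `(k₁! k₂!)⁻¹` times the symmetrization of an unsymmetrized summand
`f(z') g(z'') ∏ ζ(z'_a / z''_b)`. In a nested product the inner symmetrization is redundant up to
the factor `k₁!` (resp. `k₂!`): a permutation of the inner block extends to all variables, is
absorbed by the outer symmetrization, and leaves the cross factors `ζ` invariant. Hence both
bracketings equal `(k₁! k₂! k₃!)⁻¹` times the symmetrization of the same summand, namely
`f g h` times `ζ` over all pairs of variables from different blocks.
-/

open Equiv

section Symmetrize

variable {ι κ α M : Type*} [Fintype ι] [DecidableEq ι] [Fintype κ] [DecidableEq κ]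
  [AddCommMonoid M]

def symmetrize (F : (ι → α) → M) (v : ι → α) : M :=
  ∑ σ : Perm ι, F (v ∘ σ)

theorem symmetrize_comp_perm (F : (ι → α) → M) (ρ : Perm ι) (v : ι → α) :
    symmetrize (fun w => F (w ∘ ρ)) v = symmetrize F v :=
  Fintype.sum_equiv (Equiv.mulRight ρ) _ _ fun _ => rfl

theorem symmetrize_comp_equiv (F : (ι → α) → M) (e : ι ≃ κ) (v : ι → α) :
    symmetrize F v = symmetrize (fun w => F (w ∘ e)) (v ∘ e.symm) := by
  unfold symmetrize
  exact Fintype.sum_equiv e.permCongr _ _ fun σ => by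
    simp [Function.comp_def, Equiv.permCongr_apply]

theorem symmetrize_const_mul {S : Type*} [NonUnitalNonAssocSemiring S] (c : S)
    (F : (ι → α) → S) (v : ι → α) :
    symmetrize (fun w => c * F w) v = c * symmetrize F v :=
  (Finset.mul_sum _ _ _).symm

end Symmetrize

section ShuffleSummand

variable {α R : Type*} [CommSemiring R] (ζ : α → α → R)

/-- `ζ x y` plays the role of `ζ(x/y)`. -/
def shuffleSummand (k₁ k₂ : ℕ) (f : (Fin k₁ → α) → R) (g : (Fin k₂ → α) → R)
    (w : Fin (k₁ + k₂) → α) : R :=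
  f (fun i => w (Fin.castAdd k₂ i)) * g (fun j => w (Fin.natAdd k₁ j)) *
    ∏ i : Fin k₁, ∏ j : Fin k₂, ζ (w (Fin.castAdd k₂ i)) (w (Fin.natAdd k₁ j))

variable {k₁ k₂ : ℕ}

theorem shuffleSummand_symmetrize_left (f : (Fin k₁ → α) → R) (g : (Fin k₂ → α) → R)
    (w : Fin (k₁ + k₂) → α) :
    shuffleSummand ζ k₁ k₂ (symmetrize f) g w =
      ∑ τ : Perm (Fin k₁), shuffleSummand ζ k₁ k₂ (fun u => f (u ∘ τ)) g w := by
  simp only [shuffleSummand, symmetrize, Finset.sum_mul]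

theorem shuffleSummand_symmetrize_right (f : (Fin k₁ → α) → R) (g : (Fin k₂ → α) → R)
    (w : Fin (k₁ + k₂) → α) :
    shuffleSummand ζ k₁ k₂ f (symmetrize g) w =
      ∑ τ : Perm (Fin k₂), shuffleSummand ζ k₁ k₂ f (fun u => g (u ∘ τ)) w := by
  simp only [shuffleSummand, symmetrize, Finset.mul_sum, Finset.sum_mul]

theorem shuffleSummand_const_mul_left (c : R) (f : (Fin k₁ → α) → R) (g : (Fin k₂ → α) → R) :
    shuffleSummand ζ k₁ k₂ (fun u => c * f u) g = fun w => c * shuffleSummand ζ k₁ k₂ f g w := by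
  funext w; simp only [shuffleSummand]; ring

theorem shuffleSummand_const_mul_right (c : R) (f : (Fin k₁ → α) → R) (g : (Fin k₂ → α) → R) :
    shuffleSummand ζ k₁ k₂ f (fun u => c * g u) = fun w => c * shuffleSummand ζ k₁ k₂ f g w := by
  funext w; simp only [shuffleSummand]; ring

theorem shuffleSummand_comp_sumCongr_left (τ : Perm (Fin k₁)) (f : (Fin k₁ → α) → R)
    (g : (Fin k₂ → α) → R) (w : Fin (k₁ + k₂) → α) :
    shuffleSummand ζ k₁ k₂ f g (w ∘ finSumFinEquiv.permCongr (τ.sumCongr (Equiv.refl _))) =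
      shuffleSummand ζ k₁ k₂ (fun u => f (u ∘ τ)) g w := by
  simp only [shuffleSummand, Function.comp_def, Equiv.permCongr_apply,
    finSumFinEquiv_symm_apply_castAdd, finSumFinEquiv_symm_apply_natAdd,
    Equiv.Perm.sumCongr_apply, Sum.map_inl, Sum.map_inr, finSumFinEquiv_apply_left,
    finSumFinEquiv_apply_right, Equiv.refl_apply]
  rw [Equiv.prod_comp τ (fun i => ∏ j : Fin k₂, ζ (w (Fin.castAdd k₂ i)) (w (Fin.natAdd k₁ j)))]

theorem shuffleSummand_comp_sumCongr_right (τ : Perm (Fin k₂)) (f : (Fin k₁ → α) → R)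
    (g : (Fin k₂ → α) → R) (w : Fin (k₁ + k₂) → α) :
    shuffleSummand ζ k₁ k₂ f g (w ∘ finSumFinEquiv.permCongr ((Equiv.refl _).sumCongr τ)) =
      shuffleSummand ζ k₁ k₂ f (fun u => g (u ∘ τ)) w := by
  simp only [shuffleSummand, Function.comp_def, Equiv.permCongr_apply,
    finSumFinEquiv_symm_apply_castAdd, finSumFinEquiv_symm_apply_natAdd,
    Equiv.Perm.sumCongr_apply, Sum.map_inl, Sum.map_inr, finSumFinEquiv_apply_left,
    finSumFinEquiv_apply_right, Equiv.refl_apply]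
  congr 1
  exact Finset.prod_congr rfl fun i _ =>
    Equiv.prod_comp τ (fun j => ζ (w (Fin.castAdd k₂ i)) (w (Fin.natAdd k₁ j)))

theorem symmetrize_shuffleSummand_symmetrize_left (f : (Fin k₁ → α) → R)
    (g : (Fin k₂ → α) → R) (v : Fin (k₁ + k₂) → α) :
    symmetrize (shuffleSummand ζ k₁ k₂ (symmetrize f) g) v =
      k₁.factorial • symmetrize (shuffleSummand ζ k₁ k₂ f g) v := by
  calc symmetrize (shuffleSummand ζ k₁ k₂ (symmetrize f) g) v
      = ∑ τ : Perm (Fin k₁), symmetrize (fun w => shuffleSummand ζ k₁ k₂ f g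
          (w ∘ finSumFinEquiv.permCongr (τ.sumCongr (Equiv.refl _)))) v := by
        simp only [symmetrize, shuffleSummand_symmetrize_left, shuffleSummand_comp_sumCongr_left]
        exact Finset.sum_comm
    _ = k₁.factorial • symmetrize (shuffleSummand ζ k₁ k₂ f g) v := by
        simp only [symmetrize_comp_perm, Finset.sum_const, Finset.card_univ, Fintype.card_perm,
          Fintype.card_fin]

theorem symmetrize_shuffleSummand_symmetrize_right (f : (Fin k₁ → α) → R)
    (g : (Fin k₂ → α) → R) (v : Fin (k₁ + k₂) → α) :
    symmetrize (shuffleSummand ζ k₁ k₂ f (symmetrize g)) v =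
      k₂.factorial • symmetrize (shuffleSummand ζ k₁ k₂ f g) v := by
  calc symmetrize (shuffleSummand ζ k₁ k₂ f (symmetrize g)) v
      = ∑ τ : Perm (Fin k₂), symmetrize (fun w => shuffleSummand ζ k₁ k₂ f g
          (w ∘ finSumFinEquiv.permCongr ((Equiv.refl _).sumCongr τ))) v := by
        simp only [symmetrize, shuffleSummand_symmetrize_right, shuffleSummand_comp_sumCongr_right]
        exact Finset.sum_comm
    _ = k₂.factorial • symmetrize (shuffleSummand ζ k₁ k₂ f g) v := by
        simp only [symmetrize_comp_perm, Finset.sum_const, Finset.card_univ, Fintype.card_perm,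
          Fintype.card_fin]

theorem shuffleSummand_assoc {k₃ : ℕ} (f : (Fin k₁ → α) → R) (g : (Fin k₂ → α) → R)
    (h : (Fin k₃ → α) → R) (w : Fin (k₁ + (k₂ + k₃)) → α) :
    shuffleSummand ζ (k₁ + k₂) k₃ (shuffleSummand ζ k₁ k₂ f g) h
        (w ∘ finCongr (add_assoc k₁ k₂ k₃)) =
      shuffleSummand ζ k₁ (k₂ + k₃) f (shuffleSummand ζ k₂ k₃ g h) w := by
  have hw₁ : ∀ i, (finCongr (add_assoc k₁ k₂ k₃)) (Fin.castAdd k₃ (Fin.castAdd k₂ i)) =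
      Fin.castAdd (k₂ + k₃) i := fun i => Fin.ext rfl
  have hw₂ : ∀ j, (finCongr (add_assoc k₁ k₂ k₃)) (Fin.castAdd k₃ (Fin.natAdd k₁ j)) =
      Fin.natAdd k₁ (Fin.castAdd k₃ j) := fun j => Fin.ext rfl
  have hw₃ : ∀ l, (finCongr (add_assoc k₁ k₂ k₃)) (Fin.natAdd (k₁ + k₂) l) =
      Fin.natAdd k₁ (Fin.natAdd k₂ l) := fun l => Fin.ext (by simp [Nat.add_assoc])
  simp only [shuffleSummand, Function.comp_apply, Fin.prod_univ_add, Finset.prod_mul_distrib,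
    hw₁, hw₂, hw₃]
  ring

end ShuffleSummand

section ShuffleProduct

variable {K : Type*} [Field K] (p : LaurentPolynomial K) {k₁ k₂ k₃ : ℕ}

theorem shuf_eq_symmetrize (f : (Fin k₁ → Fld K) → Fld K) (g : (Fin k₂ → Fld K) → Fld K) :
    shuf K p k₁ k₂ f g = fun v =>
      (algebraMap K (Fld K) (k₁.factorial * k₂.factorial))⁻¹ *
        symmetrize (shuffleSummand (fun x y => zetaF K p (x / y)) k₁ k₂ f g) v :=
  rfl

variable [CharZero K]

theorem shuf_shuf_left (f : (Fin k₁ → Fld K) → Fld K) (g : (Fin k₂ → Fld K) → Fld K)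
    (h : (Fin k₃ → Fld K) → Fld K) (v : Fin (k₁ + k₂ + k₃) → Fld K) :
    shuf K p (k₁ + k₂) k₃ (shuf K p k₁ k₂ f g) h v =
      (algebraMap K (Fld K) (k₁.factorial * k₂.factorial * k₃.factorial))⁻¹ *
        symmetrize (shuffleSummand (fun x y => zetaF K p (x / y)) (k₁ + k₂) k₃
          (shuffleSummand (fun x y => zetaF K p (x / y)) k₁ k₂ f g) h) v := by
  have hk : ((k₁ + k₂).factorial : K) ≠ 0 :=
    Nat.cast_ne_zero.mpr (Nat.factorial_ne_zero _)
  simp only [shuf_eq_symmetrize, shuffleSummand_const_mul_left, symmetrize_const_mul]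
  rw [symmetrize_shuffleSummand_symmetrize_left, nsmul_eq_mul, ← mul_assoc,
    ← mul_assoc, ← map_natCast (algebraMap K (Fld K)), ← map_inv₀, ← map_inv₀, ← map_mul,
    ← map_mul, ← map_inv₀]
  congr 2
  field_simp

theorem shuf_shuf_right (f : (Fin k₁ → Fld K) → Fld K) (g : (Fin k₂ → Fld K) → Fld K)
    (h : (Fin k₃ → Fld K) → Fld K) (v : Fin (k₁ + (k₂ + k₃)) → Fld K) :
    shuf K p k₁ (k₂ + k₃) f (shuf K p k₂ k₃ g h) v =
      (algebraMap K (Fld K) (k₁.factorial * k₂.factorial * k₃.factorial))⁻¹ *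
        symmetrize (shuffleSummand (fun x y => zetaF K p (x / y)) k₁ (k₂ + k₃) f
          (shuffleSummand (fun x y => zetaF K p (x / y)) k₂ k₃ g h)) v := by
  have hk : ((k₂ + k₃).factorial : K) ≠ 0 :=
    Nat.cast_ne_zero.mpr (Nat.factorial_ne_zero _)
  simp only [shuf_eq_symmetrize, shuffleSummand_const_mul_right, symmetrize_const_mul]
  rw [symmetrize_shuffleSummand_symmetrize_right, nsmul_eq_mul, ← mul_assoc,
    ← mul_assoc, ← map_natCast (algebraMap K (Fld K)), ← map_inv₀, ← map_inv₀, ← map_mul,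
    ← map_mul, ← map_inv₀]
  congr 2
  field_simp

theorem shuf_assoc (f : (Fin k₁ → Fld K) → Fld K) (g : (Fin k₂ → Fld K) → Fld K)
    (h : (Fin k₃ → Fld K) → Fld K) (v : Fin (k₁ + k₂ + k₃) → Fld K) :
    shuf K p (k₁ + k₂) k₃ (shuf K p k₁ k₂ f g) h v =
      shuf K p k₁ (k₂ + k₃) f (shuf K p k₂ k₃ g h) (v ∘ (finCongr (add_assoc k₁ k₂ k₃)).symm) := by
  rw [shuf_shuf_left, shuf_shuf_right, symmetrize_comp_equiv _ (finCongr (add_assoc k₁ k₂ k₃))]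
  simp only [shuffleSummand_assoc]

end ShuffleProduct

theorem stmt5_general (K : Type*) [Field K] [CharZero K] (p : LaurentPolynomial K) (n n' n'' : ℕ)
    (R : (Fin n → ℤ) →₀ K) (R' : (Fin n' → ℤ) →₀ K) (R'' : (Fin n'' → ℤ) →₀ K) :
    shuf K p (n + n') n'' (shuf K p n n' (evF K R) (evF K R')) (evF K R'')
        (fun i => ZZ K i.val) =
      shuf K p n (n' + n'') (evF K R) (shuf K p n' n'' (evF K R') (evF K R''))
        (fun i => ZZ K i.val) :=
  shuf_assoc p (evF K R) (evF K R') (evF K R'') _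

/-- The shuffle product with structure function `ζ(x) = p(x)/(1−x)` is
associative: for symmetric Laurent polynomials `R, R', R''` in `n, n', n''` variables,
`(R * R') * R'' = R * (R' * R'')` as rational functions in `z₁, …, z_{n+n'+n''}` (i.e. the
two sides agree at the generic point). -/
theorem stmt5 (K : Type*) [Field K] [CharZero K] (p : LaurentPolynomial K) (n n' n'' : ℕ)
    (R : (Fin n → ℤ) →₀ K) (R' : (Fin n' → ℤ) →₀ K) (R'' : (Fin n'' → ℤ) →₀ K)
    (hR : ∀ (σ : Equiv.Perm (Fin n)) (e : Fin n → ℤ), R (e ∘ σ) = R e)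
    (hR' : ∀ (σ : Equiv.Perm (Fin n')) (e : Fin n' → ℤ), R' (e ∘ σ) = R' e)
    (hR'' : ∀ (σ : Equiv.Perm (Fin n'')) (e : Fin n'' → ℤ), R'' (e ∘ σ) = R'' e) :
    shuf K p (n + n') n'' (shuf K p n n' (evF K R) (evF K R')) (evF K R'')
        (fun i => ZZ K i.val) =
      shuf K p n (n' + n'') (evF K R) (shuf K p n' n'' (evF K R') (evF K R''))
        (fun i => ZZ K i.val) :=
  stmt5_general K p n n' n'' R R' R''

end
end

section
/- Let K be a field, let g(x) be a Laurent polynomial over K, and set ζ(x) = g(x)/(1−x) ∈ K(x). Write g(x)·(1 − x^{-1}) = ∑_{m ∈ ℤ} h_m x^m (a Laurent polynomial, so only finitely many h_m are nonzero). For integers a, b define σ(a,b) := z_1^a z_2^b ζ(z_1/z_2) + z_2^a z_1^b ζ(z_2/z_1) ∈ K(z_1, z_2). Then for all integers D and E one has ∑_{m ∈ ℤ} h_m · σ(D−m, E+m) = ∑_{m ∈ ℤ} h_m · σ(E−m, D+m). -/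
open MvPolynomial

noncomputable section

/-- The field of rational functions `K(z₁, z₂)`. -/
abbrev F2 (K : Type*) [Field K] := FractionRing (MvPolynomial (Fin 2) K)

/-- Evaluation of a one-variable Laurent polynomial `g` over `K` at an element of `K(z₁,z₂)`. -/
def lEval2 (K : Type*) [Field K] (g : LaurentPolynomial K) (x : F2 K) : F2 K :=
  Finsupp.sum g.coeff fun m c => algebraMap K (F2 K) c * x ^ m

/-- The structure function `ζ(x) = g(x)/(1 - x)`. -/
def zeta2 (K : Type*) [Field K] (g : LaurentPolynomial K) (x : F2 K) : F2 K :=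
  lEval2 K g x / (1 - x)

/-- `σ(a,b) = z₁^a z₂^b ζ(z₁/z₂) + z₂^a z₁^b ζ(z₂/z₁)`, the unnormalized shuffle product of
`z^a` and `z^b`. -/
def sigma2 (K : Type*) [Field K] (g : LaurentPolynomial K) (a b : ℤ) : F2 K :=
  (algebraMap (MvPolynomial (Fin 2) K) (F2 K) (X 0)) ^ a *
      (algebraMap (MvPolynomial (Fin 2) K) (F2 K) (X 1)) ^ b *
      zeta2 K g (algebraMap (MvPolynomial (Fin 2) K) (F2 K) (X 0) /
        algebraMap (MvPolynomial (Fin 2) K) (F2 K) (X 1)) +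
    (algebraMap (MvPolynomial (Fin 2) K) (F2 K) (X 1)) ^ a *
      (algebraMap (MvPolynomial (Fin 2) K) (F2 K) (X 0)) ^ b *
      zeta2 K g (algebraMap (MvPolynomial (Fin 2) K) (F2 K) (X 1) /
        algebraMap (MvPolynomial (Fin 2) K) (F2 K) (X 0))

/-!
Put `u = z₂/z₁` and `h(x) = g(x)(1 - x⁻¹)`. The sum over `m` factors as
`∑ₘ hₘ σ(A - m, B + m) = z₁^A z₂^B h(u) ζ(u⁻¹) + z₂^A z₁^B h(u⁻¹) ζ(u)`.
The factor `1 - x⁻¹` cancels the denominator of `ζ(x⁻¹)`, so `h(u) ζ(u⁻¹) = g(u) g(u⁻¹)` is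
invariant under `u ↦ u⁻¹`; hence both sides equal `(z₁^D z₂^E + z₂^D z₁^E) g(u) g(u⁻¹)`.
-/

open LaurentPolynomial

lemma algebraMap_X_ne_zero {σ R : Type*} [CommRing R] [IsDomain R] (i : σ) :
    algebraMap (MvPolynomial σ R) (FractionRing (MvPolynomial σ R)) (X i) ≠ 0 :=
  (map_ne_zero_iff _ (IsFractionRing.injective _ _)).mpr (X_ne_zero i)

lemma algebraMap_X_div_X_ne_one {σ K : Type*} [Field K] {i j : σ} (hij : i ≠ j) :
    algebraMap (MvPolynomial σ K) (FractionRing (MvPolynomial σ K)) (X i) /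
      algebraMap (MvPolynomial σ K) (FractionRing (MvPolynomial σ K)) (X j) ≠ 1 := by
  rw [Ne, div_eq_one_iff_eq (algebraMap_X_ne_zero j),
    (IsFractionRing.injective _ _).eq_iff, X_inj]
  exact hij

section

variable {K : Type*} [Field K]

lemma lEval2_eq_eval₂ (g : LaurentPolynomial K) {x : F2 K} (hx : x ≠ 0) :
    lEval2 K g x = eval₂ (algebraMap K (F2 K)) (Units.mk0 x hx) g := by
  conv_rhs => rw [← g.sum_coeff_single]
  rw [lEval2, map_finsuppSum]
  refine Finsupp.sum_congr fun m _ => ?_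
  rw [single_eq_C_mul_T, eval₂_C_mul_T, Units.val_zpow_eq_zpow_val, Units.val_mk0]

lemma lEval2_mul (g h : LaurentPolynomial K) {x : F2 K} (hx : x ≠ 0) :
    lEval2 K (g * h) x = lEval2 K g x * lEval2 K h x := by
  simp only [lEval2_eq_eval₂ _ hx, map_mul]

lemma lEval2_one_sub_T_neg_one {x : F2 K} (hx : x ≠ 0) :
    lEval2 K (1 - T (-1)) x = 1 - x⁻¹ := by
  rw [lEval2_eq_eval₂ _ hx, map_sub, map_one, eval₂_T, Units.val_zpow_eq_zpow_val,
    Units.val_mk0, zpow_neg_one]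

lemma lEval2_mul_one_sub_T_mul_zeta2_inv (g : LaurentPolynomial K) {x : F2 K} (hx0 : x ≠ 0)
    (hx1 : x ≠ 1) :
    lEval2 K (g * (1 - T (-1))) x * zeta2 K g x⁻¹ = lEval2 K g x * lEval2 K g x⁻¹ := by
  have h : (1 : F2 K) - x⁻¹ ≠ 0 := sub_ne_zero.mpr (Ne.symm (inv_ne_one.mpr hx1))
  rw [lEval2_mul _ _ hx0, lEval2_one_sub_T_neg_one hx0, zeta2, mul_assoc,
    mul_div_cancel₀ _ h]

lemma lEval2_mul_one_sub_T_mul_zeta2_inv_comm (g : LaurentPolynomial K) {x : F2 K}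
    (hx0 : x ≠ 0) (hx1 : x ≠ 1) :
    lEval2 K (g * (1 - T (-1))) x * zeta2 K g x⁻¹ =
      lEval2 K (g * (1 - T (-1))) x⁻¹ * zeta2 K g x := by
  have h := lEval2_mul_one_sub_T_mul_zeta2_inv g (inv_ne_zero hx0) (inv_ne_one.mpr hx1)
  rw [inv_inv] at h
  rw [lEval2_mul_one_sub_T_mul_zeta2_inv g hx0 hx1, h, mul_comm]

local notation "z₁" => algebraMap (MvPolynomial (Fin 2) K) (F2 K) (X 0)
local notation "z₂" => algebraMap (MvPolynomial (Fin 2) K) (F2 K) (X 1)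

lemma sum_coeff_mul_sigma2 (g h : LaurentPolynomial K) (A B : ℤ) :
    Finsupp.sum h.coeff (fun m c => algebraMap K (F2 K) c * sigma2 K g (A - m) (B + m)) =
      z₁ ^ A * z₂ ^ B * lEval2 K h (z₂ / z₁) * zeta2 K g (z₁ / z₂) +
        z₂ ^ A * z₁ ^ B * lEval2 K h (z₁ / z₂) * zeta2 K g (z₂ / z₁) := by
  have h₁ : (z₁ : F2 K) ≠ 0 := algebraMap_X_ne_zero 0
  have h₂ : (z₂ : F2 K) ≠ 0 := algebraMap_X_ne_zero 1
  rw [lEval2, lEval2, Finsupp.mul_sum, Finsupp.sum_mul, Finsupp.mul_sum, Finsupp.sum_mul,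
    ← Finsupp.sum_add]
  refine Finsupp.sum_congr fun m _ => ?_
  rw [sigma2, zpow_sub₀ h₁, zpow_add₀ h₂, zpow_sub₀ h₂, zpow_add₀ h₁, div_zpow, div_zpow]
  field_simp

end

/-- Writing `g(x)(1 - x⁻¹) = ∑ₘ hₘ xᵐ`, for all integers `D, E` one has
`∑ₘ hₘ σ(D−m, E+m) = ∑ₘ hₘ σ(E−m, D+m)`: the defining quadratic relation of the quiver
quantum toroidal algebra is respected by the assignment `e_d ↦ z^d` into the shuffle
algebra. -/
theorem stmt6 (K : Type*) [Field K] (g : LaurentPolynomial K) (D E : ℤ) :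
    Finsupp.sum (g * (1 - LaurentPolynomial.T (-1))).coeff
        (fun m h => algebraMap K (F2 K) h * sigma2 K g (D - m) (E + m)) =
      Finsupp.sum (g * (1 - LaurentPolynomial.T (-1))).coeff
        (fun m h => algebraMap K (F2 K) h * sigma2 K g (E - m) (D + m)) := by
  set z₁ := algebraMap (MvPolynomial (Fin 2) K) (F2 K) (X 0)
  set z₂ := algebraMap (MvPolynomial (Fin 2) K) (F2 K) (X 1)
  have hu0 : z₂ / z₁ ≠ 0 := div_ne_zero (algebraMap_X_ne_zero 1) (algebraMap_X_ne_zero 0)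
  have hu1 : z₂ / z₁ ≠ 1 := algebraMap_X_div_X_ne_one (by decide)
  have hsymm := lEval2_mul_one_sub_T_mul_zeta2_inv_comm g hu0 hu1
  rw [inv_div] at hsymm
  rw [sum_coeff_mul_sigma2, sum_coeff_mul_sigma2]
  linear_combination (z₁ ^ D * z₂ ^ E - z₂ ^ D * z₁ ^ E) * hsymm

end
end

section
/- Let K be a field, let k ≥ 1, let t_1, …, t_k be nonzero elements of K, and let g(x) be a Laurent polynomial over K such that (1 − t_a·x) divides g(x) for every a ∈ {1, …, k}. Fix a ∈ {1, …, k} and order the indices {1, …, k} as the sequence (a, a−1, …, 1, k, k−1, …, a+1); write b ≻ c if b precedes c in this sequence. Then, with cyclic conventions x_{k+1} = x_1 and t_{k+1} = t_1, the rational function ∏_{b ≻ c} g(x_c / x_b) divided by ∏_{c ∈ {1,…,k}, c ≠ a} (1 − x_c t_{c+1} / x_{c+1}) is a Laurent polynomial in x_1, …, x_k. -/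
/-!
For `c ≠ a` the index `c + 1` immediately precedes `c` in the ordering `(a, a-1, …, a+1)`, so the
numerator contains the factor `g(x_c / x_{c+1})`, which is divisible by
`1 - t_{c+1} x_c / x_{c+1}` because `1 - t_{c+1} x` divides `g`. Hence the quotient is a product of
evaluations of Laurent polynomials at Laurent monomials `x_c / x_b`, all of which lie in the
subring of Laurent polynomials of `K(x_1, …, x_k)`.
-/

open MvPolynomial

noncomputable section

/-- The field of rational functions `K(x₁, …, x_k)` (variables indexed by `Fin k`). -/
abbrev FF (K : Type*) [Field K] (k : ℕ) := FractionRing (MvPolynomial (Fin k) K)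

/-- The generic variable `x_i`. -/
def xv (K : Type*) [Field K] (k : ℕ) (i : Fin k) : FF K k :=
  algebraMap (MvPolynomial (Fin k) K) (FF K k) (X i)

/-- Evaluation of a one-variable Laurent polynomial `g` over `K` at a rational function. -/
def gEv (K : Type*) [Field K] (k : ℕ) (g : LaurentPolynomial K) (x : FF K k) : FF K k :=
  Finsupp.sum g.coeff fun m c => algebraMap K (FF K k) c * x ^ m

namespace Fin

lemma sub_add_one_lt_sub {k : ℕ} [NeZero k] {a c : Fin k} (h : c ≠ a) : a - (c + 1) < a - c := by
  obtain ⟨n, rfl⟩ := Nat.exists_eq_succ_of_ne_zero (NeZero.ne k)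
  rw [← sub_sub, sub_one_lt_iff, pos_iff_ne_zero]
  exact sub_ne_zero.2 h.symm

end Fin

lemma Subring.zpow_mem {L : Type*} [Field L] (S : Subring L) {x : L} (hx : x ∈ S)
    (hx' : x⁻¹ ∈ S) (m : ℤ) : x ^ m ∈ S := by
  obtain ⟨n, rfl | rfl⟩ := Int.eq_nat_or_neg m
  · exact zpow_natCast x n ▸ pow_mem hx n
  · exact (zpow_neg x n).symm ▸ zpow_natCast x n ▸ inv_pow x n ▸ pow_mem hx' n

lemma Subring.prod_div_prod_filter_mem {L ι : Type*} [Field L] [Fintype ι] (S : Subring L)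
    (p : ι → Prop) [DecidablePred p] (F d : ι → L) (hF : ∀ i, ¬ p i → F i ∈ S)
    (hFd : ∀ i, p i → F i / d i ∈ S) :
    (∏ i, F i) / ∏ i ∈ Finset.univ.filter p, d i ∈ S := by
  rw [← Finset.prod_filter_mul_prod_filter_not Finset.univ p, mul_div_right_comm,
    ← Finset.prod_div_distrib]
  exact mul_mem (prod_mem fun i hi => hFd i (Finset.mem_filter.1 hi).2)
    (prod_mem fun i hi => hF i (Finset.mem_filter.1 hi).2)

section LaurentSubring

variable {K : Type*} [Field K] {k : ℕ}

lemma gEv_eq_lift (g : LaurentPolynomial K) {x : FF K k} (hx : x ≠ 0) :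
    gEv K k g x =
      AddMonoidAlgebra.lift K (FF K k) ℤ
        ((Units.coeHom _).comp (zpowersHom _ (Units.mk0 x hx))) g := by
  rw [AddMonoidAlgebra.lift_apply, gEv]
  congr 1
  ext m c
  simp [Algebra.smul_def]

lemma gEv_mul (p q : LaurentPolynomial K) {x : FF K k} (hx : x ≠ 0) :
    gEv K k (p * q) x = gEv K k p x * gEv K k q x := by
  simp only [gEv_eq_lift _ hx, map_mul]

lemma gEv_one_sub_C_mul_T (r : K) {x : FF K k} (hx : x ≠ 0) :
    gEv K k (1 - LaurentPolynomial.C r * LaurentPolynomial.T 1) x = 1 - algebraMap K _ r * x := by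
  rw [gEv_eq_lift _ hx, map_sub, map_one, ← LaurentPolynomial.single_eq_C_mul_T,
    AddMonoidAlgebra.lift_single]
  simp [Algebra.smul_def]

lemma gEv_mem {S : Subring (FF K k)} (hK : ∀ r : K, algebraMap K _ r ∈ S) (q : LaurentPolynomial K)
    {x : FF K k} (hx : x ∈ S) (hx' : x⁻¹ ∈ S) : gEv K k q x ∈ S :=
  sum_mem fun m _ => mul_mem (hK _) (S.zpow_mem hx hx' m)

lemma xv_ne_zero (i : Fin k) : xv K k i ≠ 0 :=
  (map_ne_zero_iff _ (IsFractionRing.injective (MvPolynomial (Fin k) K) (FF K k))).2 (X_ne_zero i)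

lemma one_sub_xv_mul_div_xv_ne_zero {i j : Fin k} (hij : i ≠ j) (r : K) :
    1 - xv K k i * algebraMap K _ r / xv K k j ≠ 0 := by
  rw [sub_ne_zero, ne_comm, Ne, div_eq_one_iff_eq (xv_ne_zero j), xv, xv,
    IsScalarTower.algebraMap_apply K (MvPolynomial (Fin k) K), ← map_mul,
    (IsFractionRing.injective (MvPolynomial (Fin k) K) (FF K k)).eq_iff, algebraMap_eq,
    mul_comm, C_mul_X_eq_monomial, X, monomial_eq_monomial_iff]
  simp [Finsupp.single_left_inj, hij]

variable (K k)

def laurentSubring : Subring (FF K k) where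
  carrier := {y | ∃ (N : ℕ) (p : MvPolynomial (Fin k) K),
    y * (∏ i, xv K k i) ^ N = algebraMap (MvPolynomial (Fin k) K) (FF K k) p}
  one_mem' := ⟨0, 1, by simp⟩
  zero_mem' := ⟨0, 0, by simp⟩
  mul_mem' := by
    rintro y z ⟨N₁, p₁, h₁⟩ ⟨N₂, p₂, h₂⟩
    exact ⟨N₁ + N₂, p₁ * p₂, by rw [pow_add, map_mul, ← h₁, ← h₂]; ring⟩
  add_mem' := by
    rintro y z ⟨N₁, p₁, h₁⟩ ⟨N₂, p₂, h₂⟩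
    refine ⟨N₁ + N₂, p₁ * (∏ i, X i) ^ N₂ + p₂ * (∏ i, X i) ^ N₁, ?_⟩
    have hX : algebraMap _ (FF K k) (∏ i, X i) = ∏ i, xv K k i := map_prod _ _ _
    rw [map_add, map_mul, map_mul, map_pow, map_pow, hX, ← h₁, ← h₂]
    ring
  neg_mem' := by
    rintro y ⟨N, p, h⟩
    exact ⟨N, -p, by rw [map_neg, ← h, neg_mul]⟩

variable {K k}

lemma algebraMap_mem_laurentSubring (r : K) : algebraMap K _ r ∈ laurentSubring K k :=
  ⟨0, C r, by simp [IsScalarTower.algebraMap_apply K (MvPolynomial (Fin k) K) (FF K k)]⟩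

lemma xv_mem_laurentSubring (i : Fin k) : xv K k i ∈ laurentSubring K k :=
  ⟨0, X i, by simp [xv]⟩

lemma inv_xv_mem_laurentSubring (i : Fin k) : (xv K k i)⁻¹ ∈ laurentSubring K k := by
  refine ⟨1, ∏ j ∈ Finset.univ.erase i, X j, ?_⟩
  rw [pow_one, ← Finset.mul_prod_erase _ _ (Finset.mem_univ i),
    inv_mul_cancel_left₀ (xv_ne_zero i), map_prod]
  rfl

lemma xv_div_xv_mem_laurentSubring (i j : Fin k) : xv K k i / xv K k j ∈ laurentSubring K k :=
  mul_mem (xv_mem_laurentSubring i) (inv_xv_mem_laurentSubring j)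

lemma gEv_xv_div_xv_mem (q : LaurentPolynomial K) (i j : Fin k) :
    gEv K k q (xv K k i / xv K k j) ∈ laurentSubring K k :=
  gEv_mem algebraMap_mem_laurentSubring q (xv_div_xv_mem_laurentSubring i j)
    (inv_div (xv K k i) _ ▸ xv_div_xv_mem_laurentSubring j i)

lemma gEv_xv_div_xv_div_mem {q : LaurentPolynomial K} {r : K}
    (hq : (1 - LaurentPolynomial.C r * LaurentPolynomial.T 1) ∣ q) {i j : Fin k} (hij : i ≠ j) :
    gEv K k q (xv K k i / xv K k j) / (1 - xv K k i * algebraMap K _ r / xv K k j)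
      ∈ laurentSubring K k := by
  obtain ⟨q', rfl⟩ := hq
  have hx : xv K k i / xv K k j ≠ 0 := div_ne_zero (xv_ne_zero i) (xv_ne_zero j)
  have hlin : 1 - algebraMap K _ r * (xv K k i / xv K k j)
      = 1 - xv K k i * algebraMap K _ r / xv K k j := by ring
  rw [gEv_mul _ _ hx, gEv_one_sub_C_mul_T _ hx, hlin,
    mul_div_cancel_left₀ _ (one_sub_xv_mul_div_xv_ne_zero hij r)]
  exact gEv_xv_div_xv_mem q' i j

lemma prod_gEv_div_one_sub_mem [NeZero k] {g : LaurentPolynomial K} {t : Fin k → K}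
    (hdvd : ∀ i, (1 - LaurentPolynomial.C (t i) * LaurentPolynomial.T 1) ∣ g) {a c : Fin k}
    (hc : c ≠ a) :
    (∏ b ∈ Finset.univ.filter (fun b => a - b < a - c), gEv K k g (xv K k c / xv K k b)) /
        (1 - xv K k c * algebraMap K _ (t (c + 1)) / xv K k (c + 1)) ∈ laurentSubring K k := by
  have hprec : a - (c + 1) < a - c := Fin.sub_add_one_lt_sub hc
  have hsucc : c ≠ c + 1 := fun h => hprec.ne (by rw [← h])
  have hmem : c + 1 ∈ Finset.univ.filter (fun b => a - b < a - c) :=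
    Finset.mem_filter.2 ⟨Finset.mem_univ _, hprec⟩
  rw [← Finset.mul_prod_erase _ _ hmem, mul_div_right_comm]
  exact mul_mem (gEv_xv_div_xv_div_mem (hdvd (c + 1)) hsucc)
    (prod_mem fun b _ => gEv_xv_div_xv_mem g c b)

end LaurentSubring

theorem stmt8_general (K : Type*) [Field K] (k : ℕ) [NeZero k]
    (t : Fin k → K)
    (g : LaurentPolynomial K)
    (hdvd : ∀ i : Fin k,
      ((1 : LaurentPolynomial K) - LaurentPolynomial.C (t i) * LaurentPolynomial.T 1) ∣ g)
    (a : Fin k) :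
    ∃ (P : MvPolynomial (Fin k) K) (N : ℕ),
      (∏ b : Fin k, ∏ c ∈ Finset.univ.filter (fun c : Fin k => a - b < a - c),
          gEv K k g (xv K k c / xv K k b)) /
        (∏ c ∈ Finset.univ.filter (fun c : Fin k => c ≠ a),
          (1 - xv K k c * algebraMap K (FF K k) (t (c + 1)) / xv K k (c + 1))) *
        (∏ i : Fin k, xv K k i) ^ N
      = algebraMap (MvPolynomial (Fin k) K) (FF K k) P := by
  rw [Finset.prod_comm' (s' := fun c => Finset.univ.filter fun b => a - b < a - c)
    (t' := Finset.univ) fun b c => by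
      simp only [Finset.mem_filter, Finset.mem_univ, true_and, and_true]]
  obtain ⟨N, P, h⟩ := (laurentSubring K k).prod_div_prod_filter_mem (· ≠ a) _ _
    (fun c _ => prod_mem fun b _ => gEv_xv_div_xv_mem g c b)
    (fun c hc => prod_gEv_div_one_sub_mem hdvd hc)
  exact ⟨P, N, h⟩

/-- (Indices written `0, …, k-1` via `Fin k`, with its cyclic addition and
subtraction realizing the cyclic conventions `x_{k+1} = x_1`, `t_{k+1} = t_1`.)
Let `t : Fin k → K` be nonzero scalars and let `g` be a one-variable Laurent polynomial
divisible by `1 − t i · x` for every `i`.  Fix `a`, and order the indices as the cyclically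
decreasing sequence `(a, a−1, …, a+1)` starting at `a`; then `b ≻ c` iff `a − b < a − c`
in `Fin k`.  The rational function `∏_{b ≻ c} g(x_c/x_b) / ∏_{c ≠ a} (1 − x_c t_{c+1}/x_{c+1})`
is a Laurent polynomial in `x_1, …, x_k` (i.e. some monomial multiple of it is a
polynomial). -/
theorem stmt8 (K : Type*) [Field K] (k : ℕ) [NeZero k] (hk : 1 ≤ k)
    (t : Fin k → K) (ht : ∀ i, t i ≠ 0)
    (g : LaurentPolynomial K)
    (hdvd : ∀ i : Fin k,
      ((1 : LaurentPolynomial K) - LaurentPolynomial.C (t i) * LaurentPolynomial.T 1) ∣ g)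
    (a : Fin k) :
    ∃ (P : MvPolynomial (Fin k) K) (N : ℕ),
      (∏ b : Fin k, ∏ c ∈ Finset.univ.filter (fun c : Fin k => a - b < a - c),
          gEv K k g (xv K k c / xv K k b)) /
        (∏ c ∈ Finset.univ.filter (fun c : Fin k => c ≠ a),
          (1 - xv K k c * algebraMap K (FF K k) (t (c + 1)) / xv K k (c + 1))) *
        (∏ i : Fin k, xv K k i) ^ N
      = algebraMap (MvPolynomial (Fin k) K) (FF K k) P :=
  stmt8_general K k t g hdvd a

end
end
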